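/- Let M ∈ ℝ, c ∈ ℝ with c ≠ 0, and let H be the map H(x,y) = (x̄, ȳ) with x̄ = M + c·x − y², ȳ = (y + x̄² − M)/c. Then H has a fixed point (x₀, x₀) on the diagonal at which the Jacobian matrix of H has eigenvalue −1 if and only if 4M = 4 − (c − 1)² or 4M = (c + 1)(3c − 1). (These are the period-doubling curves PD₁: M = 1 − (c−1)²/4 and PD₂: M = (c+1)(3c−1)/4 of the family H.) -/

import Mathlib

/-! On the diagonal, being fixed is the single equation `x² + (1 - c)x = M`, and there
`det (J + 1) = ((c + 1)² - 4x²) / c`. Hence `x = ±(c + 1)/2`, and substituting these into the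
fixed-point equation gives `PD₁` and `PD₂` respectively. -/

/-- The map `H(x,y) = (x̄, ȳ)` with `x̄ = M + c·x − y²` and `ȳ = (y + x̄² − M)/c`,
the explicit form of the implicit system `x̄ = M + c·x − y²`, `c·ȳ = −M + y + x̄²`. -/
noncomputable def Hmap (M c : ℝ) (p : ℝ × ℝ) : ℝ × ℝ :=
  (M + c * p.1 - p.2 ^ 2,
    (p.2 + (M + c * p.1 - p.2 ^ 2) ^ 2 - M) / c)

/-- The Jacobian matrix (2×2 real derivative matrix) of `Hmap M c` at the point
`(x,y)`, where `x̄ = M + c·x − y²`: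
`[[c, −2y], [2x̄, (1 − 4x̄y)/c]]`. -/
noncomputable def HJac (M c : ℝ) (p : ℝ × ℝ) : Matrix (Fin 2) (Fin 2) ℝ :=
  !![c, -2 * p.2;
     2 * (M + c * p.1 - p.2 ^ 2), (1 - 4 * (M + c * p.1 - p.2 ^ 2) * p.2) / c]

/-- `μ ∈ ℂ` is an eigenvalue of the real 2×2 matrix `A`
(eigenvalues of real matrices are taken over `ℂ`). -/
def hasEigenvalue (A : Matrix (Fin 2) (Fin 2) ℝ) (μ : ℂ) : Prop :=
  (A.map (fun t : ℝ => (t : ℂ)) - μ • 1).det = 0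

lemma hasEigenvalue_fin_two_ofReal_iff (a b d e μ : ℝ) :
    hasEigenvalue !![a, b; d, e] μ ↔ (a - μ) * (e - μ) - b * d = 0 := by
  have hdet : (!![a, b; d, e].map (fun t : ℝ => (t : ℂ)) - (μ : ℂ) • 1).det =
      (((a - μ) * (e - μ) - b * d : ℝ) : ℂ) := by
    rw [Matrix.det_fin_two]
    simp only [Matrix.sub_apply, Matrix.map_apply, Matrix.smul_apply, Matrix.one_apply,
      Matrix.of_apply, Matrix.cons_val', Matrix.cons_val_zero, Matrix.cons_val_one,
      Matrix.empty_val', Matrix.cons_val_fin_one]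
    push_cast
    simp
  rw [hasEigenvalue, hdet, Complex.ofReal_eq_zero]

section Hmap

variable {M c : ℝ}

lemma Hmap_diag_eq_self_iff (hc : c ≠ 0) (x : ℝ) :
    Hmap M c (x, x) = (x, x) ↔ M + c * x - x ^ 2 = x := by
  simp only [Hmap, Prod.mk.injEq, div_eq_iff hc, and_iff_left_iff_imp]
  intro h
  rw [h]
  linear_combination -h

lemma hasEigenvalue_HJac_neg_one_iff (hc : c ≠ 0) {x : ℝ} (hfix : M + c * x - x ^ 2 = x) :
    hasEigenvalue (HJac M c (x, x)) (-1) ↔ x = (c + 1) / 2 ∨ x = -((c + 1) / 2) := by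
  have hneg : ((-1 : ℝ) : ℂ) = -1 := by push_cast; rfl
  rw [HJac, hfix, ← hneg, hasEigenvalue_fin_two_ofReal_iff]
  have hquad : (c - -1) * ((1 - 4 * x * x) / c - -1) - -2 * x * (2 * x) =
      ((c + 1) ^ 2 - (2 * x) ^ 2) / c := by
    field_simp
    ring
  rw [hquad, div_eq_zero_iff, or_iff_left hc, sub_eq_zero, sq_eq_sq_iff_eq_or_eq_neg]
  refine or_congr ⟨fun h => by linear_combination -h / 2, fun h => by linear_combination -2 * h⟩
    ⟨fun h => by linear_combination h / 2, fun h => by linear_combination 2 * h⟩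

end Hmap

/-- `H` has a diagonal fixed point at which the Jacobian matrix has
eigenvalue `−1` iff `4M = 4 − (c−1)²` (period-doubling curve `PD₁`) or
`4M = (c+1)(3c−1)` (period-doubling curve `PD₂`). -/
theorem stmt_13 (M c : ℝ) (hc : c ≠ 0) :
    (∃ x₀ : ℝ, Hmap M c (x₀, x₀) = (x₀, x₀) ∧
        hasEigenvalue (HJac M c (x₀, x₀)) (-1)) ↔
      (4 * M = 4 - (c - 1) ^ 2 ∨ 4 * M = (c + 1) * (3 * c - 1)) := by
  have hdiag (x : ℝ) : (Hmap M c (x, x) = (x, x) ∧ hasEigenvalue (HJac M c (x, x)) (-1)) ↔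
      M + c * x - x ^ 2 = x ∧ (x = (c + 1) / 2 ∨ x = -((c + 1) / 2)) := by
    rw [Hmap_diag_eq_self_iff hc]
    exact and_congr_right (hasEigenvalue_HJac_neg_one_iff hc)
  simp only [hdiag, and_or_left, exists_or, exists_eq_right]
  exact or_congr ⟨fun h => by linear_combination 4 * h, fun h => by linear_combination h / 4⟩
    ⟨fun h => by linear_combination 4 * h, fun h => by linear_combination h / 4⟩
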